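/- arXiv:2406.06267 — 12 statements merged into one kernel-verified Lean document; each statement's English description precedes it below -/
import Mathlib

section
/- Let Γ = (V,E) be a reduced finite simple graph. Then the group Aut^TF(Γ) of two-fold automorphisms of Γ is isomorphic to the group Aut^π(Γ) of two-fold projections of Γ; moreover Aut^π(Γ) = {π₁ ∈ Sym(V) : there exists π₂ ∈ Sym(V) with (π₁,π₂) ∈ Aut^TF(Γ)}. -/
open SimpleGraph

/-- A graph is reduced (vertex determining) if distinct vertices have distinct
open neighborhoods. -/
def Reduced {V : Type*} (G : SimpleGraph V) : Prop :=
  ∀ u v : V, G.neighborSet u = G.neighborSet v → u = v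

/-- The group of two-fold projections of a graph: permutations mapping every
open neighborhood onto some open neighborhood. -/
def autPi {V : Type*} [Fintype V] (G : SimpleGraph V) : Subgroup (Equiv.Perm V) where
  carrier := {π : Equiv.Perm V | ∀ v : V, ∃ w : V, π '' G.neighborSet v = G.neighborSet w}
  one_mem' := by
    intro v
    exact ⟨v, by simp⟩
  mul_mem' := by
    intro a b ha hb v
    obtain ⟨w, hw⟩ := hb v
    obtain ⟨u, hu⟩ := ha w
    refine ⟨u, ?_⟩
    rw [Equiv.Perm.coe_mul, Set.image_comp, hw, hu]
  inv_mem' := by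
    intro a ha v
    have hfin : (Set.range G.neighborSet).Finite := Set.finite_range _
    have hmaps : Set.MapsTo (Set.image ⇑a) (Set.range G.neighborSet)
        (Set.range G.neighborSet) := by
      rintro s ⟨u, rfl⟩
      obtain ⟨w, hw⟩ := ha u
      exact ⟨w, hw.symm⟩
    have hinj : Set.InjOn (Set.image ⇑a) (Set.range G.neighborSet) :=
      (Set.image_injective.mpr a.injective).injOn
    have hbij := (hfin.injOn_iff_bijOn_of_mapsTo hmaps).mp hinj
    obtain ⟨s, hs, hsv⟩ := hbij.surjOn ⟨v, rfl⟩
    obtain ⟨w, rfl⟩ := hs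
    refine ⟨w, ?_⟩
    have : (⇑a⁻¹) '' ((⇑a) '' G.neighborSet w) = G.neighborSet w := by
      rw [← Set.image_comp]
      simp
    rw [← this, hsv]

/-- The two-fold automorphism group of a graph: pairs of permutations (π₁, π₂) such that
(v,w) is an edge iff (π₁ v, π₂ w) is an edge. -/
def autTF {V : Type*} [Fintype V] (G : SimpleGraph V) :
    Subgroup (Equiv.Perm V × Equiv.Perm V) where
  carrier := {p | ∀ v w : V, G.Adj v w ↔ G.Adj (p.1 v) (p.2 w)}
  one_mem' := by intro v w; rfl
  mul_mem' := by
    intro a b ha hb v w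
    rw [hb v w, ha (b.1 v) (b.2 w)]
    rfl
  inv_mem' := by
    intro a ha v w
    have := ha (a.1⁻¹ v) (a.2⁻¹ w)
    simp only [Equiv.Perm.coe_inv, Equiv.apply_symm_apply] at this
    exact this.symm

/-!
A pair (π₁, π₂) is a two-fold automorphism exactly when π₁ maps every neighbourhood `N w`
onto `N (π₂ w)`. In a reduced graph a neighbourhood determines its vertex, so π₂ is determined
by π₁; and for a two-fold projection π₁ the induced vertex map `w ↦ w'` with
`π₁ '' N w = N w'` is injective, hence a permutation of the finite vertex set. Thus projection
to the first coordinate is an isomorphism from Aut^TF onto Aut^π.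
-/

section

variable {V : Type*} [Fintype V] {G : SimpleGraph V}

theorem mem_autTF_iff {π₁ π₂ : Equiv.Perm V} :
    (π₁, π₂) ∈ autTF G ↔ ∀ w, π₁ '' G.neighborSet w = G.neighborSet (π₂ w) := by
  refine ⟨fun h w => ?_, fun h v w => ?_⟩
  · ext x
    obtain ⟨v, rfl⟩ := π₁.surjective x
    simp only [π₁.injective.mem_set_image, mem_neighborSet]
    rw [G.adj_comm, h, G.adj_comm]
  · rw [G.adj_comm, ← mem_neighborSet, ← π₁.injective.mem_set_image, h, mem_neighborSet,
      G.adj_comm]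

theorem mem_autPi_of_mem_autTF {π₁ π₂ : Equiv.Perm V} (h : (π₁, π₂) ∈ autTF G) :
    π₁ ∈ autPi G :=
  fun w => ⟨π₂ w, mem_autTF_iff.mp h w⟩

theorem Reduced.snd_eq_of_mem_autTF (hred : Reduced G) {π₁ π₂ π₂' : Equiv.Perm V}
    (h : (π₁, π₂) ∈ autTF G) (h' : (π₁, π₂') ∈ autTF G) : π₂ = π₂' :=
  Equiv.ext fun w => hred _ _ <| by rw [← mem_autTF_iff.mp h w, ← mem_autTF_iff.mp h' w]

theorem Reduced.exists_mem_autTF_of_mem_autPi (hred : Reduced G) {π : Equiv.Perm V}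
    (hπ : π ∈ autPi G) : ∃ π₂ : Equiv.Perm V, (π, π₂) ∈ autTF G := by
  choose f hf using hπ
  have hinj : Function.Injective f := fun w w' h =>
    hred _ _ <| Set.image_injective.mpr π.injective <| by rw [hf, hf, h]
  exact ⟨Equiv.ofBijective f (Finite.injective_iff_bijective.mp hinj), mem_autTF_iff.mpr hf⟩

theorem Reduced.mem_autPi_iff (hred : Reduced G) {π : Equiv.Perm V} :
    π ∈ autPi G ↔ ∃ π₂ : Equiv.Perm V, (π, π₂) ∈ autTF G :=
  ⟨hred.exists_mem_autTF_of_mem_autPi, fun ⟨_, h⟩ => mem_autPi_of_mem_autTF h⟩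

variable (G) in
def autTFFst : autTF G →* Equiv.Perm V :=
  (MonoidHom.fst _ _).comp (autTF G).subtype

theorem Reduced.autTFFst_injective (hred : Reduced G) : Function.Injective (autTFFst G) := by
  rintro ⟨⟨π₁, π₂⟩, h⟩ ⟨⟨π₁', π₂'⟩, h'⟩ (rfl : π₁ = π₁')
  obtain rfl := hred.snd_eq_of_mem_autTF h h'
  rfl

theorem Reduced.range_autTFFst (hred : Reduced G) : (autTFFst G).range = autPi G := by
  ext π
  rw [hred.mem_autPi_iff]
  constructor
  · rintro ⟨⟨⟨_, π₂⟩, h⟩, rfl⟩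
    exact ⟨π₂, h⟩
  · rintro ⟨π₂, h⟩
    exact ⟨⟨(π, π₂), h⟩, rfl⟩

end

/-- For a reduced finite simple graph Γ, the group of two-fold automorphisms Aut^TF(Γ)
is isomorphic to the group of two-fold projections Aut^π(Γ), and Aut^π(Γ) consists
exactly of the permutations π₁ admitting a partner π₂ with (π₁, π₂) ∈ Aut^TF(Γ). -/
theorem stmt_0 {V : Type*} [Fintype V] (G : SimpleGraph V) (hred : Reduced G) :
    Nonempty (autTF G ≃* autPi G) ∧
      (autPi G : Set (Equiv.Perm V)) =
        {π₁ : Equiv.Perm V | ∃ π₂ : Equiv.Perm V, (π₁, π₂) ∈ autTF G} :=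
  ⟨⟨(MonoidHom.ofInjective hred.autTFFst_injective).trans
      (MulEquiv.subgroupCongr hred.range_autTFFst)⟩,
    Set.ext fun _ => hred.mem_autPi_iff⟩
end

section
/- Let Γ = (V,E) be a reduced finite simple graph. Then the map γ : Aut^π(Γ) → Sym(V) uniquely determined by π(N(v)) = N(γ(π)(v)) for all v ∈ V satisfies: γ(Aut^π(Γ)) = Aut^π(Γ); γ is a group automorphism of Aut^π(Γ); γ ∘ γ is the identity; the set of fixed points of γ equals Aut(Γ); and for every π ∈ Aut^π(Γ) and all v,w ∈ V one has (v,w) ∈ E if and only if (π(v),γ(π)(w)) ∈ E. -/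
open SimpleGraph

/-- The automorphism group of a graph, as a subgroup of the permutations of its vertices. -/
def autG {V : Type*} [Fintype V] (G : SimpleGraph V) : Subgroup (Equiv.Perm V) where
  carrier := {π : Equiv.Perm V | ∀ v w : V, G.Adj (π v) (π w) ↔ G.Adj v w}
  one_mem' := by intro v w; rfl
  mul_mem' := by
    intro a b ha hb v w
    rw [Equiv.Perm.coe_mul, Function.comp_apply, Function.comp_apply, ha, hb]
  inv_mem' := by
    intro a ha v w
    conv_rhs => rw [← Equiv.apply_symm_apply a v, ← Equiv.apply_symm_apply a w]
    rw [ha]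
    rfl

/-!
A permutation `σ` of `V` carries neighbourhoods to neighbourhoods, `σ(N(v)) = N(τ v)`, exactly when
`v ~ w ↔ σ v ~ τ w` for all `v, w`. This relation is symmetric in `σ` and `τ` because adjacency is,
and in a reduced graph `τ` is determined by `σ`. Hence `γ(π)` is again a two-fold projection with
`γ(γ(π)) = π`; `γ` is multiplicative since the relation is compatible with composition, and
`γ(π) = π` says precisely that `π` preserves adjacency.
-/

namespace SimpleGraph

variable {V : Type*} {G : SimpleGraph V} {σ τ : Equiv.Perm V}

/-- In the paper's notation, `τ = γ(σ)`. -/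
def MapsNeighborSets (G : SimpleGraph V) (σ τ : Equiv.Perm V) : Prop :=
  ∀ v, σ '' G.neighborSet v = G.neighborSet (τ v)

theorem mapsNeighborSets_iff :
    G.MapsNeighborSets σ τ ↔ ∀ v w, G.Adj v w ↔ G.Adj (σ v) (τ w) := by
  refine ⟨fun h v w => ?_, fun h v => ?_⟩
  · have := Set.ext_iff.1 (h w) (σ v)
    rwa [σ.injective.mem_set_image, mem_neighborSet, mem_neighborSet, G.adj_comm, G.adj_comm (τ w)]
      at this
  · ext x
    rw [← σ.apply_symm_apply x, σ.injective.mem_set_image, mem_neighborSet, mem_neighborSet,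
      G.adj_comm v, h, G.adj_comm]

theorem MapsNeighborSets.adj_iff (h : G.MapsNeighborSets σ τ) (v w : V) :
    G.Adj v w ↔ G.Adj (σ v) (τ w) :=
  mapsNeighborSets_iff.1 h v w

theorem MapsNeighborSets.symm (h : G.MapsNeighborSets σ τ) : G.MapsNeighborSets τ σ :=
  mapsNeighborSets_iff.2 fun v w => by rw [G.adj_comm, h.adj_iff, G.adj_comm]

theorem MapsNeighborSets.mul {σ₁ σ₂ τ₁ τ₂ : Equiv.Perm V} (h₁ : G.MapsNeighborSets σ₁ τ₁)
    (h₂ : G.MapsNeighborSets σ₂ τ₂) : G.MapsNeighborSets (σ₁ * σ₂) (τ₁ * τ₂) := fun v => by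
  rw [Equiv.Perm.coe_mul, Set.image_comp, h₂, h₁, Equiv.Perm.mul_apply]

theorem mapsNeighborSets_self_iff :
    G.MapsNeighborSets σ σ ↔ ∀ v w, G.Adj (σ v) (σ w) ↔ G.Adj v w :=
  mapsNeighborSets_iff.trans <| forall₂_congr fun _ _ => Iff.comm

theorem MapsNeighborSets.mem_autPi [Fintype V] (h : G.MapsNeighborSets σ τ) : σ ∈ autPi G :=
  fun v => ⟨τ v, h v⟩

theorem mem_autG_iff_mapsNeighborSets_self [Fintype V] : σ ∈ autG G ↔ G.MapsNeighborSets σ σ :=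
  mapsNeighborSets_self_iff.symm

end SimpleGraph

theorem Reduced.eq_of_mapsNeighborSets {V : Type*} {G : SimpleGraph V} {σ τ τ' : Equiv.Perm V}
    (hG : Reduced G) (h : G.MapsNeighborSets σ τ) (h' : G.MapsNeighborSets σ τ') : τ = τ' :=
  Equiv.ext fun v => hG _ _ (by rw [← h, h'])

/-- For a reduced finite simple graph Γ, the map γ on Aut^π(Γ) determined by
π(N(v)) = N(γ(π)(v)) maps Aut^π(Γ) onto itself, is an injective group homomorphism
(hence an automorphism of Aut^π(Γ)), is an involution, its fixed points are exactly
the automorphisms of Γ, and (v,w) ∈ E ↔ (π(v), γ(π)(w)) ∈ E. -/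
theorem stmt_1 {V : Type*} [Fintype V] (G : SimpleGraph V) (hred : Reduced G)
    (γ : autPi G → Equiv.Perm V)
    (hγ : ∀ (π : autPi G) (v : V),
      (π : Equiv.Perm V) '' G.neighborSet v = G.neighborSet (γ π v)) :
    Set.range γ = (autPi G : Set (Equiv.Perm V)) ∧
    (∀ π₁ π₂ : autPi G, γ (π₁ * π₂) = γ π₁ * γ π₂) ∧
    Function.Injective γ ∧
    (∀ π₁ π₂ : autPi G, γ π₁ = (π₂ : Equiv.Perm V) → γ π₂ = (π₁ : Equiv.Perm V)) ∧
    (∀ π : autPi G, γ π = (π : Equiv.Perm V) ↔ (π : Equiv.Perm V) ∈ autG G) ∧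
    (∀ (π : autPi G) (v w : V), G.Adj v w ↔ G.Adj ((π : Equiv.Perm V) v) (γ π w)) := by
  have hγ' (π : autPi G) : G.MapsNeighborSets π (γ π) := hγ π
  have hmem (π : autPi G) : γ π ∈ autPi G := (hγ' π).symm.mem_autPi
  have hinvol (π₁ π₂ : autPi G) (h : γ π₁ = π₂) : γ π₂ = π₁ :=
    hred.eq_of_mapsNeighborSets (hγ' π₂) (h ▸ (hγ' π₁).symm)
  refine ⟨?_, fun π₁ π₂ => hred.eq_of_mapsNeighborSets (hγ' _) ((hγ' π₁).mul (hγ' π₂)), ?_,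
    hinvol, fun π => ?_, fun π => (hγ' π).adj_iff⟩
  · refine (Set.range_subset_iff.2 hmem).antisymm fun σ hσ => ?_
    exact ⟨⟨γ ⟨σ, hσ⟩, hmem _⟩, hinvol ⟨σ, hσ⟩ _ rfl⟩
  · intro π₁ π₂ h
    exact Subtype.ext ((hinvol π₁ ⟨γ π₁, hmem π₁⟩ rfl).symm.trans (hinvol π₂ _ h.symm))
  · rw [mem_autG_iff_mapsNeighborSets_self]
    exact ⟨fun h => by simpa only [h] using hγ' π, hred.eq_of_mapsNeighborSets (hγ' π)⟩
end

section
/- Let Γ be a reduced finite simple graph, let τ₀ ∈ Aut^π(Γ), let π₁ ∈ Im(α), let π₂,π₃ ∈ Aut^π(Γ) satisfy γ(π₂) = π₂⁻¹ and γ(π₃) = π₃⁻¹, and let n ∈ ℤ. Then: (a) γ(π₁) = π₁⁻¹; (b) γ(α(τ₀)) = α(γ(τ₀)); (c) γ(π₂π₃π₂) = (π₂π₃π₂)⁻¹; (d) π₂π₁π₂ ∈ Im(α); (e) π₁ⁿ ∈ Im(α). -/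
open SimpleGraph

/-- Properties of γ and α = (π ↦ π⁻¹ γ(π)) on a reduced graph: (a) γ inverts elements
of Im(α); (b) γ(α(τ₀)) = α(γ(τ₀)); (c) if γ inverts π₂ and π₃ it inverts π₂π₃π₂;
(d) Im(α) is stable under conjugation-like products π₂π₁π₂ with γ(π₂) = π₂⁻¹;
(e) Im(α) is closed under integer powers. -/
theorem stmt_3 {V : Type*} [Fintype V] (G : SimpleGraph V) (hred : Reduced G)
    (γ : autPi G → autPi G)
    (hγ : ∀ (π : autPi G) (v : V),
      (π : Equiv.Perm V) '' G.neighborSet v = G.neighborSet ((γ π : Equiv.Perm V) v))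
    (τ₀ : autPi G) (π₁ π₂ π₃ : autPi G)
    (hπ₁ : π₁ ∈ Set.range fun π : autPi G => π⁻¹ * γ π)
    (hπ₂ : γ π₂ = π₂⁻¹) (hπ₃ : γ π₃ = π₃⁻¹) (n : ℤ) :
    γ π₁ = π₁⁻¹ ∧
    γ ((τ₀)⁻¹ * γ τ₀) = (γ τ₀)⁻¹ * γ (γ τ₀) ∧
    γ (π₂ * π₃ * π₂) = (π₂ * π₃ * π₂)⁻¹ ∧
    (π₂ * π₁ * π₂ ∈ Set.range fun π : autPi G => π⁻¹ * γ π) ∧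
    (π₁ ^ n ∈ Set.range fun π : autPi G => π⁻¹ * γ π) := by
  classical
  -- uniqueness of the "image" vertex, from reducedness
  have huniq : ∀ (π : autPi G) (v w : V),
      (π : Equiv.Perm V) '' G.neighborSet v = G.neighborSet w →
      ((γ π : autPi G) : Equiv.Perm V) v = w := by
    intro π v w h
    exact hred _ _ (((hγ π v).symm.trans h))
  -- γ is multiplicative
  have hmul : ∀ π σ : autPi G, γ (π * σ) = γ π * γ σ := by
    intro π σ
    apply Subtype.ext; apply Equiv.ext; intro v
    have h1 : ((π * σ : autPi G) : Equiv.Perm V) '' G.neighborSet v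
        = G.neighborSet (((γ π : autPi G) : Equiv.Perm V)
            (((γ σ : autPi G) : Equiv.Perm V) v)) := by
      have : ((π * σ : autPi G) : Equiv.Perm V) '' G.neighborSet v
          = (π : Equiv.Perm V) '' ((σ : Equiv.Perm V) '' G.neighborSet v) := by
        rw [← Set.image_comp]; rfl
      rw [this, hγ σ v, hγ π]
    have := huniq (π * σ) v _ h1
    simpa using this
  have hone : γ 1 = 1 := by
    apply Subtype.ext; apply Equiv.ext; intro v
    have := huniq 1 v v (by simp)
    simpa using this
  have hinv : ∀ π : autPi G, γ π⁻¹ = (γ π)⁻¹ := by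
    intro π
    have : γ π⁻¹ * γ π = 1 := by rw [← hmul, inv_mul_cancel, hone]
    exact eq_inv_of_mul_eq_one_left this
  -- adjacency characterization
  have hadj : ∀ (π : autPi G) (v u : V),
      G.Adj (((γ π : autPi G) : Equiv.Perm V) v) ((π : Equiv.Perm V) u) ↔ G.Adj v u := by
    intro π v u
    have h1 : (π : Equiv.Perm V) u ∈ (π : Equiv.Perm V) '' G.neighborSet v
        ↔ u ∈ G.neighborSet v :=
      (Equiv.injective _).mem_set_image
    rw [hγ π v] at h1
    simpa [SimpleGraph.mem_neighborSet] using h1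
  -- γ is an involution
  have hγγ : ∀ π : autPi G, γ (γ π) = π := by
    intro π
    apply Subtype.ext; apply Equiv.ext; intro v
    refine huniq (γ π) v ((π : Equiv.Perm V) v) ?_
    ext w
    obtain ⟨u, rfl⟩ := ((γ π : autPi G) : Equiv.Perm V).surjective w
    have h1 : ((γ π : autPi G) : Equiv.Perm V) u
          ∈ ((γ π : autPi G) : Equiv.Perm V) '' G.neighborSet v
        ↔ u ∈ G.neighborSet v :=
      (Equiv.injective _).mem_set_image
    rw [h1]
    have h2 := hadj π u v
    simp only [SimpleGraph.mem_neighborSet]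
    rw [G.adj_comm v u, ← h2, G.adj_comm]
  obtain ⟨τ, hτ⟩ := hπ₁
  simp only at hτ
  have ha : γ π₁ = π₁⁻¹ := by
    rw [← hτ, hmul, hinv, hγγ, mul_inv_rev, inv_inv]
  -- γ as a monoid hom, for zpow
  let f : autPi G →* autPi G := { toFun := γ, map_one' := hone, map_mul' := hmul }
  have hzpow : ∀ m : ℤ, γ (π₁ ^ m) = π₁ ^ (-m) := by
    intro m
    have h := map_zpow f π₁ m
    simp only [f, MonoidHom.coe_mk, OneHom.coe_mk] at h
    rw [h, ha, inv_zpow, zpow_neg]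
  refine ⟨ha, by rw [hmul, hinv], ?_, ?_, ?_⟩
  · rw [hmul, hmul, hπ₂, hπ₃]
    group
  · refine ⟨τ * π₂⁻¹, ?_⟩
    simp only
    rw [hmul, hinv, hπ₂, inv_inv, mul_inv_rev, inv_inv]
    calc π₂ * τ⁻¹ * (γ τ * π₂) = π₂ * (τ⁻¹ * γ τ) * π₂ := by group
      _ = π₂ * π₁ * π₂ := by rw [hτ]
  · rcases Int.even_or_odd n with ⟨k, hk⟩ | ⟨k, hk⟩
    · refine ⟨π₁ ^ (-k), ?_⟩
      simp only
      rw [hzpow, neg_neg, hk]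
      group
    · refine ⟨τ * π₁ ^ (-k), ?_⟩
      simp only
      rw [hmul, hzpow, neg_neg, mul_inv_rev]
      calc (π₁ ^ (-k))⁻¹ * τ⁻¹ * (γ τ * π₁ ^ k)
          = π₁ ^ k * (τ⁻¹ * γ τ) * π₁ ^ k := by group
        _ = π₁ ^ k * π₁ * π₁ ^ k := by rw [hτ]
        _ = π₁ ^ n := by rw [hk]; group
end

section
/- Let Γ = (V,E) be a reduced finite simple graph and let π₁ ∈ Im(α). Then the subgraph of Γ induced by any orbit of π₁ on V is a coclique; that is, for every v ∈ V and every k ∈ ℤ, (v, π₁ᵏ(v)) ∉ E. -/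
/-!
Write `π₁ = π⁻¹ σ` with `σ = γ π`. The defining property of `γ` says `v ~ w ↔ σ v ~ π w`.
Hence `v ≁ π₁ v` (it would give the loop `σ v ~ σ v`), and the map `(v, w) ↦ (π₁ v, π₁⁻¹ w)`
preserves adjacency, which moves any edge `v ~ π₁ᵏ v` onto a loop or onto an edge `x ~ π₁ x`.
-/

open SimpleGraph

namespace SimpleGraph

variable {V : Type*} (G : SimpleGraph V)

theorem adj_apply_apply_iff_of_image_neighborSet {p s : Equiv.Perm V}
    (h : ∀ v, p '' G.neighborSet v = G.neighborSet (s v)) (v w : V) :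
    G.Adj (s v) (p w) ↔ G.Adj v w := by
  rw [← mem_neighborSet, ← h, p.injective.mem_set_image, mem_neighborSet]

section TwistedPair

variable {G} {p s : Equiv.Perm V} (h : ∀ v w, G.Adj (s v) (p w) ↔ G.Adj v w)
include h

theorem not_adj_inv_mul_apply (v : V) : ¬ G.Adj v ((p⁻¹ * s) v) := by
  rw [← h, Equiv.Perm.mul_apply, Equiv.Perm.coe_inv, Equiv.apply_symm_apply]
  exact G.irrefl

theorem adj_inv_mul_apply_iff (v w : V) :
    G.Adj ((p⁻¹ * s) v) ((p⁻¹ * s)⁻¹ w) ↔ G.Adj v w := by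
  rw [mul_inv_rev, inv_inv, Equiv.Perm.mul_apply, Equiv.Perm.mul_apply, adj_comm, ← h]
  simp only [Equiv.Perm.coe_inv, Equiv.apply_symm_apply]
  rw [adj_comm, h]

end TwistedPair

section Shift

variable {G} {q : Equiv.Perm V} (hq : ∀ v w, G.Adj (q v) (q⁻¹ w) ↔ G.Adj v w)
include hq

theorem adj_zpow_apply_zpow_neg_apply_iff (n : ℤ) (v w : V) :
    G.Adj ((q ^ n) v) ((q ^ (-n)) w) ↔ G.Adj v w := by
  induction n using Int.induction_on generalizing v w with
  | zero => simp
  | succ n ih =>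
    rw [neg_add, zpow_add_one, zpow_add, zpow_neg_one, Equiv.Perm.mul_apply,
      Equiv.Perm.mul_apply, ih, hq]
  | pred n ih =>
    rw [neg_sub', sub_neg_eq_add, zpow_sub_one, zpow_add_one, Equiv.Perm.mul_apply,
      Equiv.Perm.mul_apply, ih, ← hq]
    simp only [Equiv.Perm.coe_inv, Equiv.apply_symm_apply, Equiv.symm_apply_apply]

theorem not_adj_zpow_apply (hloop : ∀ v, ¬ G.Adj v (q v)) (v : V) (k : ℤ) :
    ¬ G.Adj v ((q ^ k) v) := by
  obtain ⟨m, rfl | rfl⟩ := Int.even_or_odd' k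
  · rw [← adj_zpow_apply_zpow_neg_apply_iff hq m, ← Equiv.Perm.mul_apply, ← zpow_add,
      show -m + 2 * m = m by ring]
    exact G.irrefl
  · rw [← adj_zpow_apply_zpow_neg_apply_iff hq m, ← Equiv.Perm.mul_apply, ← zpow_add,
      show -m + (2 * m + 1) = 1 + m by ring, zpow_add, zpow_one, Equiv.Perm.mul_apply]
    exact hloop _

end Shift

end SimpleGraph

theorem stmt_4_general {V : Type*} [Fintype V] (G : SimpleGraph V)
    (γ : autPi G → autPi G)
    (hγ : ∀ (π : autPi G) (v : V),
      (π : Equiv.Perm V) '' G.neighborSet v = G.neighborSet ((γ π : Equiv.Perm V) v))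
    (π₁ : autPi G) (hπ₁ : π₁ ∈ Set.range fun π : autPi G => π⁻¹ * γ π) :
    ∀ (v : V) (k : ℤ), ¬ G.Adj v (((π₁ ^ k : autPi G) : Equiv.Perm V) v) := by
  obtain ⟨π, rfl⟩ := hπ₁
  have h := G.adj_apply_apply_iff_of_image_neighborSet (hγ π)
  intro v k
  push_cast
  exact not_adj_zpow_apply (adj_inv_mul_apply_iff h) (not_adj_inv_mul_apply h) v k

/-- For a reduced graph Γ and π₁ ∈ Im(α), the subgraph induced by any orbit of π₁
is a coclique: no vertex is adjacent to any of its images under integer powers of π₁. -/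
theorem stmt_4 {V : Type*} [Fintype V] (G : SimpleGraph V) (hred : Reduced G)
    (γ : autPi G → autPi G)
    (hγ : ∀ (π : autPi G) (v : V),
      (π : Equiv.Perm V) '' G.neighborSet v = G.neighborSet ((γ π : Equiv.Perm V) v))
    (π₁ : autPi G) (hπ₁ : π₁ ∈ Set.range fun π : autPi G => π⁻¹ * γ π) :
    ∀ (v : V) (k : ℤ), ¬ G.Adj v (((π₁ ^ k : autPi G) : Equiv.Perm V) v) :=
  stmt_4_general G γ hγ π₁ hπ₁
end

section
/- Let H be a finite group and let σ ∈ Aut(H) satisfy σ² = id. If 2 divides the index [H : Fix(σ)], then 2 divides |Fix(σ)|, where Fix(σ) = {h ∈ H : σ(h) = h} is the subgroup of fixed points of σ. -/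
/-- The subgroup of fixed points of an automorphism σ of a group H. -/
def fixSubgroup {H : Type*} [Group H] (σ : MulAut H) : Subgroup H where
  carrier := {h : H | σ h = h}
  one_mem' := by simp
  mul_mem' := by
    intro a b ha hb
    simp only [Set.mem_setOf_eq] at *
    rw [map_mul, ha, hb]
  inv_mem' := by
    intro a ha
    simp only [Set.mem_setOf_eq] at *
    rw [map_inv, ha]

/-- Let H be a finite group and σ an involutive automorphism of H. If 2 divides the
index [H : Fix(σ)], then 2 divides |Fix(σ)|. -/
theorem stmt_5 {H : Type*} [Group H] [Finite H] (σ : MulAut H) (hσ : σ * σ = 1)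
    (hind : 2 ∣ (fixSubgroup σ).index) :
    2 ∣ Nat.card (fixSubgroup σ) := by
  have hσ2 : σ ^ 2 = 1 := by rw [pow_two]; exact hσ
  set S := Subgroup.zpowers σ with hS
  have hp : IsPGroup 2 S := by
    intro g
    refine ⟨1, ?_⟩
    obtain ⟨g, hg⟩ := g
    rw [Subgroup.mem_zpowers_iff] at hg
    obtain ⟨n, rfl⟩ := hg
    refine Subtype.ext ?_
    rw [SubgroupClass.coe_pow]
    show ((σ ^ n) ^ (2 ^ 1) : MulAut H) = 1
    rw [pow_one, ← zpow_natCast, ← zpow_mul, mul_comm, zpow_mul, zpow_natCast, hσ2, one_zpow]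
  have key := hp.card_modEq_card_fixedPoints H
  have hfix : MulAction.fixedPoints S H = (fixSubgroup σ : Set H) := by
    ext h
    constructor
    · intro hh
      exact hh ⟨σ, Subgroup.mem_zpowers σ⟩
    · intro hh g
      have hle : Subgroup.zpowers σ ≤ MulAction.stabilizer (MulAut H) h := by
        rw [Subgroup.zpowers_le]
        exact hh
      exact hle g.2
  rw [hfix] at key
  have hcard : Nat.card (fixSubgroup σ) * (fixSubgroup σ).index = Nat.card H :=
    Subgroup.card_mul_index _
  have h2H : 2 ∣ Nat.card H := by
    rw [← hcard]; exact Dvd.dvd.mul_left hind _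
  have : Nat.card H ≡ 0 [MOD 2] := (Nat.modEq_zero_iff_dvd).2 h2H
  have := key.symm.trans this
  exact (Nat.modEq_zero_iff_dvd).1 this
end

section
/- Let Γ = (V,E) be a finite simple graph whose complement Γ^C is reduced, and let π₀ ∈ Aut^τ(Γ). Then for every integer r ≥ 1 and every vertex v ∈ V, π₀(B(v,r)) = B(γ^r(π₀)(v), r), where γ is the map associated with Aut^π(Γ^C) = Aut^τ(Γ) and B(v,r) = {w ∈ V : d(v,w) ≤ r} is the ball of radius r around v in Γ. -/
open SimpleGraph

lemma stmt10_ball_one {V : Type*} (G : SimpleGraph V) (v : V) :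
    {w : V | G.edist v w ≤ 1} = insert v (G.neighborSet v) := by
  ext w
  simp only [Set.mem_setOf_eq, Set.mem_insert_iff, mem_neighborSet]
  constructor
  · intro h
    rcases eq_or_ne v w with h' | h'
    · exact Or.inl h'.symm
    · right
      have h1 : G.edist v w = 1 :=
        le_antisymm h (Order.one_le_iff_pos.mpr (G.edist_pos_of_ne h'))
      exact (edist_eq_one_iff_adj (G := G)).mp h1
  · rintro (rfl | h)
    · simp [SimpleGraph.edist_self]
    · exact le_of_eq ((edist_eq_one_iff_adj (G := G)).mpr h)

lemma stmt10_compl_nbhd {V : Type*} (G : SimpleGraph V) (v : V) :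
    Gᶜ.neighborSet v = {w : V | G.edist v w ≤ 1}ᶜ := by
  rw [stmt10_ball_one]
  ext w
  simp only [mem_neighborSet, compl_adj, Set.mem_compl_iff, Set.mem_insert_iff,
    mem_neighborSet]
  tauto

lemma stmt10_decomp {V : Type*} (G : SimpleGraph V) (r : ℕ) (v : V) :
    {w : V | G.edist v w ≤ ((r + 1 : ℕ) : ℕ∞)} =
      ⋃ u ∈ {u : V | G.edist v u ≤ (r : ℕ∞)}, {w : V | G.edist u w ≤ 1} := by
  ext w
  simp only [Set.mem_setOf_eq, Set.mem_iUnion, exists_prop]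
  constructor
  · intro h
    have hne : G.edist v w ≠ ⊤ := (lt_of_le_of_lt h (WithTop.coe_lt_top _)).ne
    obtain ⟨p, hp⟩ := G.exists_walk_of_edist_ne_top hne
    have hlen : p.length ≤ r + 1 := by
      have := hp ▸ h
      exact_mod_cast this
    by_cases hle : p.length ≤ r
    · refine ⟨w, ?_, by simp [SimpleGraph.edist_self]⟩
      calc G.edist v w ≤ p.length := G.edist_le p
        _ ≤ (r : ℕ∞) := by exact_mod_cast hle
    · cases hq : p.reverse with
      | nil => exact ⟨v, by simp [SimpleGraph.edist_self], by simp [SimpleGraph.edist_self]⟩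
      | cons hadj q' =>
        rename_i x
        refine ⟨x, ?_, ?_⟩
        · calc G.edist v x ≤ q'.reverse.length := G.edist_le q'.reverse
            _ ≤ (r : ℕ∞) := by
              have h1 : q'.length + 1 = p.length := by
                have := congrArg SimpleGraph.Walk.length hq
                simpa [SimpleGraph.Walk.length_reverse] using this.symm
              have : q'.length ≤ r := by omega
              simpa [SimpleGraph.Walk.length_reverse] using (by exact_mod_cast this :
                ((q'.length : ℕ∞) ≤ (r : ℕ∞)))
        · exact le_of_eq ((edist_eq_one_iff_adj (G := G)).mpr hadj.symm)
  · rintro ⟨u, h1, h2⟩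
    calc G.edist v w ≤ G.edist v u + G.edist u w := G.edist_triangle
      _ ≤ (r : ℕ∞) + 1 := add_le_add h1 h2
      _ = ((r + 1 : ℕ) : ℕ∞) := by push_cast; ring

lemma stmt10_base {V : Type*} [Fintype V] (G : SimpleGraph V)
    (γ : autPi Gᶜ → autPi Gᶜ)
    (hγ : ∀ (π : autPi Gᶜ) (v : V),
      (π : Equiv.Perm V) '' Gᶜ.neighborSet v = Gᶜ.neighborSet ((γ π : Equiv.Perm V) v))
    (π : autPi Gᶜ) (v : V) :
    (π : Equiv.Perm V) '' {w : V | G.edist v w ≤ 1} =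
      {w : V | G.edist ((γ π : Equiv.Perm V) v) w ≤ 1} := by
  have h := hγ π v
  rw [stmt10_compl_nbhd, stmt10_compl_nbhd,
    Set.image_compl_eq (Equiv.bijective _)] at h
  exact compl_inj_iff.mp h

lemma stmt10_key {V : Type*} [Fintype V] (G : SimpleGraph V)
    (γ : autPi Gᶜ → autPi Gᶜ)
    (hγ : ∀ (π : autPi Gᶜ) (v : V),
      (π : Equiv.Perm V) '' Gᶜ.neighborSet v = Gᶜ.neighborSet ((γ π : Equiv.Perm V) v)) :
    ∀ r : ℕ, ∀ π : autPi Gᶜ, ∀ v : V,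
      (π : Equiv.Perm V) '' {w : V | G.edist v w ≤ ((r + 1 : ℕ) : ℕ∞)} =
        {w : V | G.edist (((γ^[r + 1] π : autPi Gᶜ) : Equiv.Perm V) v) w ≤ ((r + 1 : ℕ) : ℕ∞)} := by
  intro r
  induction r with
  | zero =>
    intro π v
    simpa using stmt10_base G γ hγ π v
  | succ n ih =>
    intro π v
    rw [stmt10_decomp G (n + 1) v, Set.image_iUnion₂]
    simp_rw [stmt10_base G γ hγ π]
    have h1 : (⋃ u ∈ {u : V | G.edist v u ≤ ((n + 1 : ℕ) : ℕ∞)},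
        {w : V | G.edist ((γ π : Equiv.Perm V) u) w ≤ 1}) =
        ⋃ u' ∈ (γ π : Equiv.Perm V) '' {u : V | G.edist v u ≤ ((n + 1 : ℕ) : ℕ∞)},
        {w : V | G.edist u' w ≤ 1} := by
      rw [Set.biUnion_image]
    rw [h1, ih (γ π) v, ← stmt10_decomp, Function.iterate_succ_apply,
      Function.iterate_succ_apply, Function.iterate_succ_apply]

/-- Let Γ be a graph whose complement is reduced, let π₀ be a topological automorphism
of Γ (equivalently a two-fold projection of Γᶜ), and let γ be the map associated with
Aut^π(Γᶜ) = Aut^τ(Γ). Then for every r ≥ 1 and every vertex v,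
π₀(B(v,r)) = B(γʳ(π₀)(v), r), where B(v,r) is the ball of radius r in Γ. -/
theorem stmt_10 {V : Type*} [Fintype V] (G : SimpleGraph V) (hred : Reduced Gᶜ)
    (π₀ : autPi Gᶜ)
    (hπ₀ : ∀ v : V, ∃ w : V,
      (π₀ : Equiv.Perm V) '' (insert v (G.neighborSet v)) = insert w (G.neighborSet w))
    (γ : autPi Gᶜ → autPi Gᶜ)
    (hγ : ∀ (π : autPi Gᶜ) (v : V),
      (π : Equiv.Perm V) '' Gᶜ.neighborSet v = Gᶜ.neighborSet ((γ π : Equiv.Perm V) v)) :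
    ∀ r : ℕ, 1 ≤ r → ∀ v : V,
      (π₀ : Equiv.Perm V) '' {w : V | G.edist v w ≤ (r : ℕ∞)} =
        {w : V | G.edist (((γ^[r] π₀ : autPi Gᶜ) : Equiv.Perm V) v) w ≤ (r : ℕ∞)} := by
  intro r hr v
  obtain ⟨s, rfl⟩ : ∃ s, r = s + 1 := ⟨r - 1, by omega⟩
  exact stmt10_key G γ hγ s π₀ v
end

section
/- Let Γ = (V,E) be a finite simple graph whose complement Γ^C is reduced, let π₀ ∈ Aut^τ(Γ), and let v,w ∈ V. Then for every integer n ≥ 1, d(v,w) ∈ {2n−1, 2n} if and only if d(π₀(v), π₀(w)) ∈ {2n−1, 2n}. -/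
open SimpleGraph

section aux

variable {V : Type*} (G : SimpleGraph V)

/-- Complement neighborhoods are complements of closed balls. -/
lemma compl_nbhd (v : V) :
    Gᶜ.neighborSet v = (insert v (G.neighborSet v))ᶜ := by
  ext x
  simp only [mem_neighborSet, compl_adj, Set.mem_compl_iff, Set.mem_insert_iff]
  constructor
  · rintro ⟨hne, hna⟩ h
    rcases h with h | h
    · exact hne h.symm
    · exact hna h
  · intro h
    push_neg at h
    exact ⟨fun e => h.1 e.symm, h.2⟩

lemma ball_inj (hred : Reduced Gᶜ) {u v : V}
    (h : insert u (G.neighborSet u) = insert v (G.neighborSet v)) : u = v := by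
  apply hred
  rw [compl_nbhd, compl_nbhd, h]

/-- Two vertices of a common closed ball are mapped to vertices at distance ≤ 2. -/
lemma step_lemma (π₀ : Equiv.Perm V)
    (hπ₀ : ∀ v : V, ∃ w : V,
      π₀ '' (insert v (G.neighborSet v)) = insert w (G.neighborSet w))
    {a b c : V} (ha : a ∈ insert c (G.neighborSet c))
    (hb : b ∈ insert c (G.neighborSet c)) :
    G.edist (π₀ a) (π₀ b) ≤ 2 := by
  obtain ⟨d, hd⟩ := hπ₀ c
  have hd1 : ∀ x, x ∈ insert c (G.neighborSet c) → G.edist d (π₀ x) ≤ 1 := by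
    intro x hx
    have : π₀ x ∈ insert d (G.neighborSet d) := by
      rw [← hd]; exact Set.mem_image_of_mem _ hx
    rcases this with h | h
    · rw [h, edist_self]; exact zero_le_one
    · rw [edist_eq_one_iff_adj.mpr h]
  calc G.edist (π₀ a) (π₀ b) ≤ G.edist (π₀ a) d + G.edist d (π₀ b) :=
        SimpleGraph.edist_triangle
    _ ≤ 1 + 1 := by
        gcongr
        · rw [edist_comm]; exact hd1 a ha
        · exact hd1 b hb
    _ = 2 := by norm_num

/-- Forward half: distances ≤ 2k are not increased past 2k. -/
lemma half_lemma (π₀ : Equiv.Perm V)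
    (hπ₀ : ∀ v : V, ∃ w : V,
      π₀ '' (insert v (G.neighborSet v)) = insert w (G.neighborSet w)) :
    ∀ k : ℕ, ∀ v w : V, G.edist v w ≤ (2 * k : ℕ) →
      G.edist (π₀ v) (π₀ w) ≤ (2 * k : ℕ) := by
  intro k
  induction k with
  | zero =>
    intro v w h
    simp only [Nat.mul_zero, Nat.cast_zero, nonpos_iff_eq_zero] at h ⊢
    rw [edist_eq_zero_iff] at h ⊢
    rw [h]
  | succ k ih =>
    intro v w h
    have hne : G.edist v w ≠ ⊤ := ne_top_of_le_ne_top (ENat.coe_ne_top _) h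
    obtain ⟨p, hp⟩ := exists_walk_of_edist_ne_top hne
    have hlen : (p.length : ℕ∞) ≤ (2 * (k + 1) : ℕ) := hp ▸ h
    have hlen' : p.length ≤ 2 * (k + 1) := by exact_mod_cast hlen
    clear hp hlen h hne
    match p, hlen' with
    | SimpleGraph.Walk.nil, _ => simp [SimpleGraph.edist_self]
    | SimpleGraph.Walk.cons h SimpleGraph.Walk.nil, _ =>
      -- v adjacent to w
      have h1 : v ∈ insert w (G.neighborSet w) := by
        right; exact h.symm
      have h2 : w ∈ insert w (G.neighborSet w) := by left; rfl
      calc G.edist (π₀ v) (π₀ w) ≤ 2 := step_lemma G π₀ hπ₀ h1 h2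
        _ ≤ (2 * (k + 1) : ℕ) := by
            rw [show ((2 : ℕ∞) = ((2 : ℕ) : ℕ∞)) from rfl]
            exact_mod_cast Nat.le_mul_of_pos_right 2 (Nat.succ_pos k)
    | SimpleGraph.Walk.cons (v := x) h (SimpleGraph.Walk.cons (v := y) h' q), hl =>
      have hq : q.length ≤ 2 * k := by
        simp only [SimpleGraph.Walk.length_cons] at hl
        omega
      have ihq : G.edist (π₀ y) (π₀ w) ≤ (2 * k : ℕ) :=
        ih y w (le_trans (edist_le q) (by exact_mod_cast hq))
      have hstep : G.edist (π₀ v) (π₀ y) ≤ 2 := by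
        refine step_lemma G π₀ hπ₀ (c := x) ?_ ?_
        · right; exact h.symm
        · right; exact h'
      calc G.edist (π₀ v) (π₀ w)
          ≤ G.edist (π₀ v) (π₀ y) + G.edist (π₀ y) (π₀ w) := SimpleGraph.edist_triangle
        _ ≤ 2 + (2 * k : ℕ) := by gcongr
        _ = (2 * (k + 1) : ℕ) := by
            rw [show ((2 : ℕ∞) = ((2 : ℕ) : ℕ∞)) from rfl, ← Nat.cast_add]
            norm_num; ring

end aux

/-- Let Γ be a graph whose complement is reduced and let π₀ be a topological
automorphism of Γ (a permutation mapping every closed ball of radius 1 onto some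
closed ball of radius 1). Then for every n ≥ 1 and all vertices v, w:
d(v,w) ∈ {2n−1, 2n} iff d(π₀(v), π₀(w)) ∈ {2n−1, 2n}. -/
theorem stmt_11 {V : Type*} [Fintype V] (G : SimpleGraph V) (hred : Reduced Gᶜ)
    (π₀ : Equiv.Perm V)
    (hπ₀ : ∀ v : V, ∃ w : V,
      π₀ '' (insert v (G.neighborSet v)) = insert w (G.neighborSet w)) :
    ∀ n : ℕ, 1 ≤ n → ∀ v w : V,
      (G.edist v w = ((2 * n - 1 : ℕ) : ℕ∞) ∨ G.edist v w = ((2 * n : ℕ) : ℕ∞)) ↔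
        (G.edist (π₀ v) (π₀ w) = ((2 * n - 1 : ℕ) : ℕ∞) ∨
          G.edist (π₀ v) (π₀ w) = ((2 * n : ℕ) : ℕ∞)) := by
  -- the inverse permutation is also a topological automorphism
  classical
  have hπ₀' : ∀ v : V, ∃ w : V,
      π₀.symm '' (insert v (G.neighborSet v)) = insert w (G.neighborSet w) := by
    set f : V → V := fun v => Classical.choose (hπ₀ v) with hf
    have hfspec : ∀ v, π₀ '' (insert v (G.neighborSet v))
        = insert (f v) (G.neighborSet (f v)) := fun v => Classical.choose_spec (hπ₀ v)
    have hfinj : Function.Injective f := by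
      intro a b hab
      apply ball_inj G hred
      have := (hfspec a).trans (hab ▸ (hfspec b).symm)
      exact Set.image_injective.mpr π₀.injective this
    have hfsurj : Function.Surjective f := Finite.surjective_of_injective hfinj
    intro v
    obtain ⟨u, hu⟩ := hfsurj v
    refine ⟨u, ?_⟩
    rw [← hu, ← hfspec u, Set.image_image]
    simp
  have key : ∀ k : ℕ, ∀ v w : V,
      (G.edist v w ≤ (2 * k : ℕ)) ↔ (G.edist (π₀ v) (π₀ w) ≤ (2 * k : ℕ)) := by
    intro k v w
    constructor
    · exact half_lemma G π₀ hπ₀ k v w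
    · intro h
      have := half_lemma G π₀.symm hπ₀' k (π₀ v) (π₀ w) h
      simpa using this
  intro n hn v w
  -- characterize membership in {2n-1, 2n}
  have char : ∀ (e : ℕ∞),
      (e = ((2 * n - 1 : ℕ) : ℕ∞) ∨ e = ((2 * n : ℕ) : ℕ∞)) ↔
        (e ≤ (2 * n : ℕ) ∧ ¬ e ≤ (2 * (n - 1) : ℕ)) := by
    intro e
    constructor
    · rintro (rfl | rfl)
      · constructor
        · exact_mod_cast Nat.sub_le _ _
        · intro h
          have : (2 * n - 1 : ℕ) ≤ 2 * (n - 1) := by exact_mod_cast h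
          omega
      · constructor
        · exact le_refl _
        · intro h
          have : (2 * n : ℕ) ≤ 2 * (n - 1) := by exact_mod_cast h
          omega
    · rintro ⟨h1, h2⟩
      have hne : e ≠ ⊤ := ne_top_of_le_ne_top (ENat.coe_ne_top _) h1
      lift e to ℕ using hne
      have h1' : e ≤ 2 * n := by exact_mod_cast h1
      have h2' : ¬ e ≤ 2 * (n - 1) := fun hc => h2 (by exact_mod_cast hc)
      have : e = 2 * n - 1 ∨ e = 2 * n := by omega
      rcases this with h | h <;> [left; right] <;> exact Nat.cast_inj.mpr h
  rw [char, char, key n, key (n - 1)]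
end

section
/- For each positive integer n, let P(n) denote the proportion, among all 2^(n choose 2) labeled simple graphs on the vertex set {1,…,n}, of those graphs Γ whose two-fold automorphism group Aut^TF(Γ) is nontrivial (contains an element other than (id,id)). Then P(n) tends to 0 as n tends to infinity. -/
/-!
Fix `(π₁, π₂)` and a set `M` of vertices disjoint from `π₁ '' M`; let `W` be the complement of
`M ∪ π₁ '' M`. For `u ∈ M`, `w ∈ W` a compatible graph has `u ~ w ↔ π₁ u ~ π₂ w`, and the pair
`{π₁ u, π₂ w}` is never of the form `{u', w'}` with `u' ∈ M`, `w' ∈ W`. So a compatible graph is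
determined by its edges outside these `|M| |W|` pairs. A maximal such `M` satisfies
`|supp π₁| ≤ 3 |M|`, and shrinking it to `⌈|supp π₁| / 3⌉` elements leaves `|W| ≥ (n - 4) / 3`:
at most `2 ^ (C(n,2) - |supp π₁| (n - 4) / 9)` graphs are compatible, and symmetrically for `π₂`.
As at most `n ^ a` permutations have a given support of size `a`, summing over all pairs
`(π₁, π₂) ≠ 1` bounds the proportion by `(1 + n c ^ (n - 4)) ^ (2 n) - 1` where `c ^ 18 = 1 / 2`.
-/

open Finset Equiv Filter Topology
open scoped Classical

variable {V : Type*}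

namespace SimpleGraph

def IsTwoFoldAut (G : SimpleGraph V) (π₁ π₂ : Perm V) : Prop :=
  ∀ v w, G.Adj v w ↔ G.Adj (π₁ v) (π₂ w)

theorem IsTwoFoldAut.swap {G : SimpleGraph V} {π₁ π₂ : Perm V} (h : G.IsTwoFoldAut π₁ π₂) :
    G.IsTwoFoldAut π₂ π₁ := fun v w => by
  rw [adj_comm, h w v, adj_comm]

end SimpleGraph

variable [Fintype V] [DecidableEq V]

theorem Equiv.Perm.exists_disjoint_image_and_card_support_le_three_mul (π : Perm V) :
    ∃ M : Finset V, _root_.Disjoint M (M.image π) ∧ #π.support ≤ 3 * #M := by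
  obtain ⟨M, hM, hmax⟩ := exists_max_image
    ({M : Finset V | _root_.Disjoint M (M.image π)} : Finset (Finset V)) card ⟨∅, by simp⟩
  rw [mem_filter] at hM
  refine ⟨M, hM.2, ?_⟩
  have hcover : π.support ⊆ M ∪ M.image π ∪ M.image π.symm := fun x hx => by
    by_contra hxM
    simp only [mem_union, mem_image, not_or, not_exists, not_and] at hxM
    have hins : _root_.Disjoint (insert x M) ((insert x M).image π) := by
      rw [image_insert, disjoint_insert_left, disjoint_insert_right]
      refine ⟨?_, fun h => hxM.2 _ h (π.symm_apply_apply x), hM.2⟩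
      simpa [Ne.symm (Perm.mem_support.mp hx)] using hxM.1.2
    have := hmax (insert x M) (by simpa using hins)
    rw [card_insert_of_notMem hxM.1.1] at this
    omega
  calc #π.support ≤ #(M ∪ M.image π ∪ M.image π.symm) := card_le_card hcover
    _ ≤ #M + #M + #M := by
        grw [card_union_le, card_union_le, card_image_le, card_image_le]
    _ = 3 * #M := by ring

theorem Equiv.Perm.card_filter_support_eq_le (A : Finset V) :
    #{π : Perm V | π.support = A} ≤ Fintype.card V ^ #A := by
  have hinj : Set.InjOn (fun (π : Perm V) (x : A) => π x)
      ({π : Perm V | π.support = A} : Finset (Perm V)) := by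
    intro π hπ π' hπ' h
    simp only [coe_filter, mem_univ, true_and, Set.mem_ofPred_eq] at hπ hπ'
    ext x
    by_cases hx : x ∈ A
    · exact congrFun h ⟨x, hx⟩
    · rw [Perm.notMem_support.mp (hπ ▸ hx), Perm.notMem_support.mp (hπ' ▸ hx)]
  simpa using card_le_card_of_injOn _ (fun _ _ => mem_univ _) hinj

theorem Equiv.Perm.sum_pow_card_support_le {y : ℝ} (hy : 0 ≤ y) :
    ∑ π : Perm V, y ^ #π.support ≤ (1 + Fintype.card V * y) ^ Fintype.card V := by
  calc ∑ π : Perm V, y ^ #π.support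
      = ∑ A : Finset V, ∑ π : Perm V with π.support = A, y ^ #π.support :=
        (sum_fiberwise _ _ _).symm
    _ = ∑ A : Finset V, #{π : Perm V | π.support = A} * y ^ #A := by
        refine sum_congr rfl fun A _ => ?_
        rw [sum_congr rfl fun π hπ => by rw [(mem_filter.mp hπ).2], sum_const, nsmul_eq_mul]
    _ ≤ ∑ A : Finset V, (Fintype.card V * y) ^ #A := by
        gcongr with A
        rw [mul_pow]
        gcongr
        exact_mod_cast card_filter_support_eq_le A
    _ = (1 + Fintype.card V * y) ^ Fintype.card V := by
        simpa [add_comm] using Fintype.sum_pow_mul_eq_add_pow V (Fintype.card V * y) 1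

namespace SimpleGraph

theorem card_mul_two_pow_le_of_determined (𝒢 : Finset (SimpleGraph V)) (S : Finset (Sym2 V))
    (hS : ∀ e ∈ S, ¬e.IsDiag)
    (hdet : ∀ e ∈ S, ∃ e' ∉ S, ∀ G ∈ 𝒢, e ∈ G.edgeSet ↔ e' ∈ G.edgeSet) :
    #𝒢 * 2 ^ #S ≤ 2 ^ (Fintype.card V).choose 2 := by
  set E := (⊤ : SimpleGraph V).edgeFinset
  have hSE : S ⊆ E := fun e he => by
    induction e using Sym2.ind with
    | h u w => simpa [E] using hS _ he
  let restrict (G : SimpleGraph V) : Finset (Sym2 V) := {e | e ∉ S ∧ e ∈ G.edgeSet}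
  have hmaps : ∀ G ∈ 𝒢, restrict G ∈ (E \ S).powerset := fun G _ => by
    simp only [mem_powerset, subset_iff, mem_filter, mem_univ, true_and, Finset.mem_sdiff,
      restrict]
    exact fun e ⟨heS, heG⟩ => ⟨by simpa [E] using edgeSet_mono le_top heG, heS⟩
  have hinj : Set.InjOn restrict 𝒢 := fun G hG G' hG' h => by
    have off : ∀ e ∉ S, (e ∈ G.edgeSet ↔ e ∈ G'.edgeSet) := fun e he => by
      simpa [restrict, he] using congrArg (e ∈ ·) h
    refine edgeSet_inj.mp (Set.ext fun e => ?_)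
    by_cases he : e ∈ S
    · obtain ⟨e', he', hee'⟩ := hdet e he
      rw [hee' G hG, hee' G' hG']
      exact off e' he'
    · exact off e he
  calc #𝒢 * 2 ^ #S ≤ 2 ^ #(E \ S) * 2 ^ #S := by
        gcongr
        simpa using card_le_card_of_injOn restrict hmaps hinj
    _ = 2 ^ (Fintype.card V).choose 2 := by
        rw [← pow_add, card_sdiff_add_card_eq_card hSE, card_edgeFinset_top_eq_card_choose_two]

theorem card_isTwoFoldAut_mul_le (π₁ π₂ : Perm V) {M : Finset V}
    (hM : Disjoint M (M.image π₁)) :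
    #{G : SimpleGraph V | G.IsTwoFoldAut π₁ π₂} * 2 ^ (#M * (Fintype.card V - 2 * #M)) ≤
      2 ^ (Fintype.card V).choose 2 := by
  set W := (M ∪ M.image π₁)ᶜ
  have hMW : Disjoint M W := disjoint_compl_right.mono_left subset_union_left
  have hW : #W = Fintype.card V - 2 * #M := by
    rw [card_compl, card_union_of_disjoint hM, card_image_of_injective _ π₁.injective, two_mul]
  have hinj : Set.InjOn Sym2.mk.uncurry ((M ×ˢ W : Finset (V × V)) : Set (V × V)) := by
    rintro ⟨u, w⟩ huw ⟨u', w'⟩ huw' h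
    simp only [coe_product, Set.mem_prod, mem_coe] at huw huw'
    rcases Sym2.eq_iff.mp h with ⟨rfl, rfl⟩ | ⟨rfl, rfl⟩
    · rfl
    · exact absurd huw.1 (Finset.disjoint_right.mp hMW huw'.2)
  have key := card_mul_two_pow_le_of_determined {G : SimpleGraph V | G.IsTwoFoldAut π₁ π₂}
    ((M ×ˢ W).image Sym2.mk.uncurry) ?_ ?_
  · rwa [card_image_of_injOn hinj, card_product, hW] at key
  · simp only [mem_image, mem_product]
    rintro _ ⟨⟨u, w⟩, ⟨hu, hw⟩, rfl⟩
    exact fun huw => Finset.disjoint_left.mp hMW hu (Sym2.mk_isDiag_iff.mp huw ▸ hw)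
  · simp only [mem_image, mem_product]
    rintro _ ⟨⟨u, w⟩, ⟨hu, hw⟩, rfl⟩
    refine ⟨s(π₁ u, π₂ w), ?_, fun G hG => (mem_filter.mp hG).2 u w⟩
    rintro ⟨⟨u', w'⟩, ⟨hu', hw'⟩, h⟩
    have hπu : π₁ u ∈ M.image π₁ := mem_image_of_mem π₁ hu
    rcases Sym2.eq_iff.mp h with ⟨rfl, -⟩ | ⟨-, rfl⟩
    · exact Finset.disjoint_left.mp hM hu' hπu
    · exact mem_compl.mp hw' (mem_union_right M hπu)

theorem exists_card_isTwoFoldAut_mul_le (π₁ π₂ : Perm V) :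
    ∃ k, #π₁.support * (Fintype.card V - 4) ≤ 9 * k ∧
      #{G : SimpleGraph V | G.IsTwoFoldAut π₁ π₂} * 2 ^ k ≤ 2 ^ (Fintype.card V).choose 2 := by
  obtain ⟨M, hM, hsupp⟩ := π₁.exists_disjoint_image_and_card_support_le_three_mul
  obtain ⟨M', hM'M, hcard⟩ :=
    exists_subset_card_eq (s := M) (n := (#π₁.support + 2) / 3) (by omega)
  refine ⟨#M' * (Fintype.card V - 2 * #M'), ?_,
    card_isTwoFoldAut_mul_le π₁ π₂ (hM.mono hM'M (image_subset_image hM'M))⟩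
  have hsn : #π₁.support ≤ Fintype.card V := card_le_univ _
  calc #π₁.support * (Fintype.card V - 4)
      ≤ (3 * #M') * (3 * (Fintype.card V - 2 * #M')) := by gcongr <;> omega
    _ = 9 * (#M' * (Fintype.card V - 2 * #M')) := by ring

theorem card_isTwoFoldAut_div_le {c : ℝ} (hc0 : 0 ≤ c) (hc1 : c ≤ 1) (hc : 1 / 2 ≤ c ^ 18)
    (π₁ π₂ : Perm V) :
    (#{G : SimpleGraph V | G.IsTwoFoldAut π₁ π₂} : ℝ) / 2 ^ (Fintype.card V).choose 2 ≤
      (c ^ (Fintype.card V - 4)) ^ #π₁.support * (c ^ (Fintype.card V - 4)) ^ #π₂.support := by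
  have hswap : ({G : SimpleGraph V | G.IsTwoFoldAut π₂ π₁} : Finset (SimpleGraph V)) =
      ({G : SimpleGraph V | G.IsTwoFoldAut π₁ π₂} : Finset (SimpleGraph V)) :=
    filter_congr fun G _ => ⟨IsTwoFoldAut.swap, IsTwoFoldAut.swap⟩
  obtain ⟨k₁, hk₁, h₁⟩ := exists_card_isTwoFoldAut_mul_le π₁ π₂
  obtain ⟨k₂, hk₂, h₂⟩ := exists_card_isTwoFoldAut_mul_le π₂ π₁
  rw [hswap] at h₂
  have hdiv : ∀ k, #{G : SimpleGraph V | G.IsTwoFoldAut π₁ π₂} * 2 ^ k ≤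
      2 ^ (Fintype.card V).choose 2 →
      (#{G : SimpleGraph V | G.IsTwoFoldAut π₁ π₂} : ℝ) / 2 ^ (Fintype.card V).choose 2 ≤
        (c ^ 18) ^ k := fun k h => by
    grw [← hc]
    rw [div_le_iff₀ (by positivity), one_div_pow, div_mul_eq_mul_div, one_mul,
      le_div_iff₀ (by positivity)]
    exact_mod_cast h
  calc _ ≤ (c ^ 18) ^ max k₁ k₂ := by
        rcases max_choice k₁ k₂ with h | h <;> rw [h]
        exacts [hdiv k₁ h₁, hdiv k₂ h₂]
    _ ≤ c ^ ((#π₁.support + #π₂.support) * (Fintype.card V - 4)) := by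
        rw [← pow_mul]
        exact pow_le_pow_of_le_one hc0 hc1 (by rw [add_mul]; omega)
    _ = _ := by ring

theorem card_exists_isTwoFoldAut_div_le {c : ℝ} (hc0 : 0 ≤ c) (hc1 : c ≤ 1)
    (hc : 1 / 2 ≤ c ^ 18) :
    (#{G : SimpleGraph V | ∃ p : Perm V × Perm V, p ≠ 1 ∧ G.IsTwoFoldAut p.1 p.2} : ℝ) /
        2 ^ (Fintype.card V).choose 2 ≤
      (1 + Fintype.card V * c ^ (Fintype.card V - 4)) ^ (2 * Fintype.card V) - 1 := by
  set n := Fintype.card V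
  set y := c ^ (n - 4)
  have hsub : ({G : SimpleGraph V | ∃ p : Perm V × Perm V, p ≠ 1 ∧ G.IsTwoFoldAut p.1 p.2} :
      Finset _) ⊆ (univ.erase (1 : Perm V × Perm V)).biUnion
        fun p => {G | G.IsTwoFoldAut p.1 p.2} := fun G => by
    simp
  calc _ ≤ ∑ p ∈ univ.erase (1 : Perm V × Perm V),
        (#{G : SimpleGraph V | G.IsTwoFoldAut p.1 p.2} : ℝ) / 2 ^ n.choose 2 := by
        rw [← sum_div]
        gcongr
        exact_mod_cast (card_le_card hsub).trans card_biUnion_le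
    _ ≤ ∑ p ∈ univ.erase (1 : Perm V × Perm V), y ^ #p.1.support * y ^ #p.2.support :=
        sum_le_sum fun p _ => card_isTwoFoldAut_div_le hc0 hc1 hc p.1 p.2
    _ = (∑ π : Perm V, y ^ #π.support) ^ 2 - 1 := by
        rw [sum_erase_eq_sub (mem_univ _), Fintype.sum_prod_type, sq, sum_mul_sum]
        simp
    _ ≤ ((1 + n * y) ^ n) ^ 2 - 1 := by
        gcongr
        exact Perm.sum_pow_card_support_le (by positivity)
    _ = _ := by ring

end SimpleGraph

theorem tendsto_pow_mul_pow_sub_of_lt_one (k j : ℕ) {r : ℝ} (h0 : 0 < r) (h1 : r < 1) :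
    Tendsto (fun n : ℕ => (n : ℝ) ^ k * r ^ (n - j)) atTop (𝓝 0) := by
  have h := (tendsto_pow_const_mul_const_pow_of_lt_one k h0.le h1).const_mul (r ^ j)⁻¹
  rw [mul_zero] at h
  refine h.congr' ?_
  filter_upwards [eventually_ge_atTop j] with n hn
  rw [pow_sub₀ r h0.ne' hn]
  ring

/-- The proportion, among all 2^(n choose 2) labeled simple graphs on n vertices, of
graphs with a nontrivial two-fold automorphism (a pair (π₁,π₂) ≠ (id,id) with
(v,w) ∈ E ⟺ (π₁ v, π₂ w) ∈ E) tends to 0 as n → ∞. -/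
theorem stmt_15 :
    Filter.Tendsto
      (fun n : ℕ =>
        (Nat.card {G : SimpleGraph (Fin n) //
            ∃ p : Equiv.Perm (Fin n) × Equiv.Perm (Fin n), p ≠ 1 ∧
              ∀ v w : Fin n, G.Adj v w ↔ G.Adj (p.1 v) (p.2 w)} : ℝ) /
          (2 ^ n.choose 2 : ℝ))
      Filter.atTop (nhds 0) := by
  set c : ℝ := (1 / 2) ^ ((18 : ℕ)⁻¹ : ℝ)
  have hc0 : 0 < c := by positivity
  have hc1 : c < 1 := Real.rpow_lt_one (by norm_num) (by norm_num) (by positivity)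
  have hc : c ^ 18 = 1 / 2 := Real.rpow_inv_natCast_pow (by norm_num) (by norm_num)
  have hbound : ∀ n : ℕ,
      (Nat.card {G : SimpleGraph (Fin n) //
          ∃ p : Perm (Fin n) × Perm (Fin n), p ≠ 1 ∧ G.IsTwoFoldAut p.1 p.2} : ℝ) /
        2 ^ n.choose 2 ≤ Real.exp (2 * (n ^ 2 * c ^ (n - 4))) - 1 := fun n => by
    rw [Nat.card_eq_fintype_card, Fintype.card_subtype]
    have h := SimpleGraph.card_exists_isTwoFoldAut_div_le (V := Fin n) hc0.le hc1.le hc.ge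
    rw [Fintype.card_fin] at h
    refine h.trans (sub_le_sub_right ?_ 1)
    calc (1 + n * c ^ (n - 4)) ^ (2 * n) ≤ Real.exp (n * c ^ (n - 4)) ^ (2 * n) := by
          gcongr
          linarith [Real.add_one_le_exp (n * c ^ (n - 4))]
      _ = Real.exp (2 * (n ^ 2 * c ^ (n - 4))) := by
          rw [← Real.exp_nat_mul]
          push_cast
          ring_nf
  have hlim : Tendsto (fun n : ℕ => Real.exp (2 * (n ^ 2 * c ^ (n - 4))) - 1) atTop (𝓝 0) := by
    simpa using ((Real.continuous_exp.tendsto _).comp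
      ((tendsto_pow_mul_pow_sub_of_lt_one 2 4 hc0 hc1).const_mul 2)).sub_const 1
  exact squeeze_zero (fun n => by positivity) hbound hlim
end

section
/- Let Γ be a reduced finite simple graph with vertex set {1,…,n} and adjacency matrix A. Then a permutation p of {1,…,n} belongs to Aut^π(Γ) if and only if there exists a permutation q of {1,…,n} with m_p · A = A · m_q; moreover, if such a q exists then q = γ(p). -/
open SimpleGraph

/-- The permutation matrix of q: the i-th column is the standard basis vector e_{q(i)}. -/
def permMat {n : ℕ} (q : Equiv.Perm (Fin n)) : Matrix (Fin n) (Fin n) ℚ :=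
  Matrix.of fun i j => if i = q j then 1 else 0

lemma entryL {n : ℕ} (G : SimpleGraph (Fin n)) [DecidableRel G.Adj]
    (p : Equiv.Perm (Fin n)) (i j : Fin n) :
    (permMat p * G.adjMatrix ℚ) i j = G.adjMatrix ℚ (p.symm i) j := by
  simp only [permMat, Matrix.mul_apply, Matrix.of_apply, ite_mul, one_mul, zero_mul]
  simp_rw [show ∀ k, (i = p k) ↔ (p.symm i = k) from fun k => (Equiv.symm_apply_eq p).symm]
  simp

lemma entryR {n : ℕ} (G : SimpleGraph (Fin n)) [DecidableRel G.Adj]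
    (q : Equiv.Perm (Fin n)) (i j : Fin n) :
    (G.adjMatrix ℚ * permMat q) i j = G.adjMatrix ℚ i (q j) := by
  simp only [permMat, Matrix.mul_apply, Matrix.of_apply, mul_ite, mul_one, mul_zero]
  simp

lemma matEq_iff {n : ℕ} (G : SimpleGraph (Fin n)) [DecidableRel G.Adj]
    (p q : Equiv.Perm (Fin n)) :
    (permMat p * G.adjMatrix ℚ = G.adjMatrix ℚ * permMat q) ↔
    ∀ v j, (G.Adj v j ↔ G.Adj (p v) (q j)) := by
  constructor
  · intro h v j
    have := congrFun (congrFun h (p v)) j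
    rw [entryL, entryR, Equiv.symm_apply_apply] at this
    simp only [SimpleGraph.adjMatrix_apply] at this
    by_cases h1 : G.Adj v j <;> by_cases h2 : G.Adj (p v) (q j) <;> simp_all
  · intro h
    ext i j
    rw [entryL, entryR]
    have := h (p.symm i) j
    rw [Equiv.apply_symm_apply] at this
    simp [SimpleGraph.adjMatrix_apply, this]

lemma img_iff {n : ℕ} (G : SimpleGraph (Fin n)) [DecidableRel G.Adj]
    (p q : Equiv.Perm (Fin n)) :
    (∀ j, ⇑p '' G.neighborSet j = G.neighborSet (q j)) ↔
    ∀ v j, (G.Adj v j ↔ G.Adj (p v) (q j)) := by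
  constructor
  · intro h v j
    have := Set.ext_iff.mp (h j) (p v)
    simp only [Set.mem_image, mem_neighborSet] at this
    constructor
    · intro hv
      exact ((this.mp ⟨v, G.adj_symm hv, rfl⟩)).symm
    · intro hv
      obtain ⟨x, hx, hxe⟩ := this.mpr (G.adj_symm hv)
      rw [← p.injective hxe]; exact G.adj_symm hx
  · intro h j
    ext x
    simp only [Set.mem_image, mem_neighborSet]
    constructor
    · rintro ⟨v, hv, rfl⟩
      exact G.adj_symm ((h v j).mp (G.adj_symm hv))
    · intro hx
      refine ⟨p.symm x, ?_, p.apply_symm_apply x⟩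
      have := (h (p.symm x) j).mpr
      rw [p.apply_symm_apply] at this
      exact G.adj_symm (this (G.adj_symm hx))

/-- For a reduced graph Γ on {1,…,n} with adjacency matrix A, a permutation p lies in
Aut^π(Γ) iff m_p · A = A · m_q for some permutation q; moreover such a q equals γ(p). -/
theorem stmt_16 {n : ℕ} (G : SimpleGraph (Fin n)) [DecidableRel G.Adj]
    (hred : Reduced G)
    (γ : autPi G → autPi G)
    (hγ : ∀ (π : autPi G) (v : Fin n),
      (π : Equiv.Perm (Fin n)) '' G.neighborSet v =
        G.neighborSet ((γ π : Equiv.Perm (Fin n)) v))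
    (p : Equiv.Perm (Fin n)) :
    (p ∈ autPi G ↔
      ∃ q : Equiv.Perm (Fin n), permMat p * G.adjMatrix ℚ = G.adjMatrix ℚ * permMat q) ∧
    (∀ q : Equiv.Perm (Fin n),
      permMat p * G.adjMatrix ℚ = G.adjMatrix ℚ * permMat q →
      ∀ hp : p ∈ autPi G, ((γ ⟨p, hp⟩ : autPi G) : Equiv.Perm (Fin n)) = q) := by
  constructor
  · constructor
    · intro hp
      refine ⟨(γ ⟨p, hp⟩ : autPi G), (matEq_iff G p _).mpr ((img_iff G p _).mp ?_)⟩
      intro j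
      exact hγ ⟨p, hp⟩ j
    · rintro ⟨q, hq⟩
      intro v
      exact ⟨q v, (img_iff G p q).mpr ((matEq_iff G p q).mp hq) v⟩
  · intro q hq hp
    have himg := (img_iff G p q).mpr ((matEq_iff G p q).mp hq)
    refine Equiv.ext fun v => hred _ _ ?_
    rw [← hγ ⟨p, hp⟩ v, himg v]
end

section
/- Let Γ₁ and Γ₂ be reduced finite simple graphs on the vertex set {1,…,n} with adjacency matrices A₁ and A₂ respectively. If there exist permutations p, q of {1,…,n} such that m_p⁻¹ · A₂ · m_p = A₁ · m_q, then q ∈ Ant(Γ₁), and Γ₁ is isomorphic to Γ₂ if and only if q ∈ Im(α_{Γ₁}). -/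
/-!
Entrywise, `m_p⁻¹ A₂ m_p = A₁ m_q` reads `p i ~₂ p j ↔ i ~₁ q j`. Symmetry of `~₂` makes the
relation `i ~₁ q j` symmetric, which says exactly `q (N v) = N (q⁻¹ v)`; so `q ∈ Aut^π(Γ₁)` and,
`Γ₁` being reduced, `γ q = q⁻¹`. Reducedness also makes `γ` a group endomorphism. Given an
isomorphism `f`, the permutation `π = p⁻¹ ∘ f` satisfies `(q π) (N v) = N (π v)`, i.e.
`γ (q π) = π`, whence `q = α ((q π)⁻¹)`. Conversely, if `q = π⁻¹ γ π` then `p ∘ (γ π)⁻¹` is an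
isomorphism `Γ₁ ≃ Γ₂`.
-/

open SimpleGraph

lemma permMat_eq_permMatrix {n : ℕ} (q : Equiv.Perm (Fin n)) :
    permMat q = (q⁻¹).permMatrix ℚ := by
  ext i j
  simp [permMat, PEquiv.toMatrix_apply, Equiv.eq_symm_apply, eq_comm]

lemma mul_permMat {n : ℕ} (M : Matrix (Fin n) (Fin n) ℚ) (q : Equiv.Perm (Fin n)) :
    M * permMat q = M.submatrix id q := by
  rw [permMat_eq_permMatrix, PEquiv.mul_toMatrix_toPEquiv]
  rfl

lemma inv_permMat {n : ℕ} (p : Equiv.Perm (Fin n)) : (permMat p)⁻¹ = permMat p⁻¹ :=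
  Matrix.inv_eq_right_inv <| by
    rw [permMat_eq_permMatrix, permMat_eq_permMatrix, ← Matrix.permMatrix_mul, inv_mul_cancel,
      Matrix.permMatrix_one]

lemma inv_permMat_mul_mul_permMat {n : ℕ} (p : Equiv.Perm (Fin n)) (M : Matrix (Fin n) (Fin n) ℚ) :
    (permMat p)⁻¹ * M * permMat p = M.submatrix p p := by
  rw [inv_permMat, mul_permMat, permMat_eq_permMatrix, inv_inv, PEquiv.toMatrix_toPEquiv_mul]
  rfl

lemma adj_iff_of_permMat_conj {n : ℕ} {G₁ G₂ : SimpleGraph (Fin n)}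
    [DecidableRel G₁.Adj] [DecidableRel G₂.Adj] {p q : Equiv.Perm (Fin n)}
    (hmat : (permMat p)⁻¹ * G₂.adjMatrix ℚ * permMat p = G₁.adjMatrix ℚ * permMat q)
    (i j : Fin n) : G₂.Adj (p i) (p j) ↔ G₁.Adj i (q j) := by
  have h := congrFun₂ hmat i j
  rw [inv_permMat_mul_mul_permMat, mul_permMat] at h
  by_cases h₁ : G₁.Adj i (q j) <;> simpa [h₁] using h

section

variable {V W : Type*} {G : SimpleGraph V} {H : SimpleGraph W} {e : V ≃ W} {q : Equiv.Perm V}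

lemma image_neighborSet_eq_iff {π : Equiv.Perm V} {v w : V} :
    π '' G.neighborSet v = G.neighborSet w ↔ ∀ x, G.Adj v x ↔ G.Adj w (π x) := by
  rw [Set.ext_iff, ← π.forall_congr_right]
  simp

lemma Reduced.eq_of_image_neighborSet (hred : Reduced G) {π σ τ : Equiv.Perm V}
    (hσ : ∀ v, π '' G.neighborSet v = G.neighborSet (σ v))
    (hτ : ∀ v, π '' G.neighborSet v = G.neighborSet (τ v)) : σ = τ :=
  Equiv.ext fun v => hred _ _ ((hσ v).symm.trans (hτ v))

lemma adj_apply_comm_of_adj_iff (hadj : ∀ i j, H.Adj (e i) (e j) ↔ G.Adj i (q j)) (i j : V) :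
    G.Adj i (q j) ↔ G.Adj j (q i) := by
  rw [← hadj, ← hadj, H.adj_comm]

lemma image_neighborSet_of_adj_iff (hadj : ∀ i j, H.Adj (e i) (e j) ↔ G.Adj i (q j)) (v : V) :
    q '' G.neighborSet v = G.neighborSet (q⁻¹ v) :=
  image_neighborSet_eq_iff.mpr fun x => by
    rw [adj_apply_comm_of_adj_iff hadj]
    simp [G.adj_comm]

variable [Fintype V]

def IsGammaMap (G : SimpleGraph V) (γ : autPi G → autPi G) : Prop :=
  ∀ (π : autPi G) (v : V),
    (π : Equiv.Perm V) '' G.neighborSet v = G.neighborSet ((γ π : Equiv.Perm V) v)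

variable {γ : autPi G → autPi G}

lemma IsGammaMap.adj_iff (hγ : IsGammaMap G γ) (π : autPi G) (v x : V) :
    G.Adj v x ↔ G.Adj ((γ π : Equiv.Perm V) v) ((π : Equiv.Perm V) x) :=
  image_neighborSet_eq_iff.mp (hγ π v) x

lemma Reduced.coe_gamma_eq (hred : Reduced G) (hγ : IsGammaMap G γ) {π : autPi G}
    {σ : Equiv.Perm V} (hσ : ∀ v, (π : Equiv.Perm V) '' G.neighborSet v = G.neighborSet (σ v)) :
    (γ π : Equiv.Perm V) = σ :=
  hred.eq_of_image_neighborSet (hγ π) hσ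

lemma Reduced.gamma_mul (hred : Reduced G) (hγ : IsGammaMap G γ) (a b : autPi G) :
    γ (a * b) = γ a * γ b :=
  Subtype.ext <| hred.coe_gamma_eq hγ fun v => by
    rw [Subgroup.coe_mul, Equiv.Perm.coe_mul, Set.image_comp, hγ b, hγ a]
    rfl

lemma Reduced.gamma_inv (hred : Reduced G) (hγ : IsGammaMap G γ) (a : autPi G) :
    γ a⁻¹ = (γ a)⁻¹ :=
  map_inv (MonoidHom.mk' γ (hred.gamma_mul hγ)) a

lemma mem_autPi_of_adj_iff (hadj : ∀ i j, H.Adj (e i) (e j) ↔ G.Adj i (q j)) : q ∈ autPi G :=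
  fun v => ⟨q⁻¹ v, image_neighborSet_of_adj_iff hadj v⟩

lemma Reduced.mem_range_inv_mul_gamma_of_iso (hred : Reduced G)
    (hγ : IsGammaMap G γ) (hadj : ∀ i j, H.Adj (e i) (e j) ↔ G.Adj i (q j)) (f : G ≃g H) :
    ⟨q, mem_autPi_of_adj_iff hadj⟩ ∈ Set.range fun π : autPi G => π⁻¹ * γ π := by
  set π : Equiv.Perm V := f.toEquiv.trans e.symm
  have hπ : ∀ v, (q * π) '' G.neighborSet v = G.neighborSet (π v) := fun v =>
    image_neighborSet_eq_iff.mpr fun x => by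
      rw [Equiv.Perm.mul_apply, ← hadj, ← f.map_adj_iff]
      simp [π]
  let T : autPi G := ⟨q * π, fun v => ⟨π v, hπ v⟩⟩
  have hγT : (γ T : Equiv.Perm V) = π := hred.coe_gamma_eq hγ hπ
  refine ⟨T⁻¹, Subtype.ext ?_⟩
  simp [hred.gamma_inv hγ, hγT, T]

lemma IsGammaMap.nonempty_iso (hγ : IsGammaMap G γ)
    (hadj : ∀ i j, H.Adj (e i) (e j) ↔ G.Adj i (q j)) (π : autPi G)
    (hπ : (π⁻¹ * γ π : Equiv.Perm V) = q) : Nonempty (G ≃g H) := by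
  refine ⟨⟨((γ π : Equiv.Perm V)⁻¹).trans e, fun {a b} => ?_⟩⟩
  change H.Adj (e _) (e _) ↔ _
  rw [hadj, ← hπ, hγ.adj_iff π]
  simp

end

theorem stmt_17_general {n : ℕ} (G₁ G₂ : SimpleGraph (Fin n))
    [DecidableRel G₁.Adj] [DecidableRel G₂.Adj]
    (hred₁ : Reduced G₁)
    (γ₁ : autPi G₁ → autPi G₁)
    (hγ₁ : ∀ (π : autPi G₁) (v : Fin n),
      (π : Equiv.Perm (Fin n)) '' G₁.neighborSet v =
        G₁.neighborSet ((γ₁ π : Equiv.Perm (Fin n)) v))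
    (p q : Equiv.Perm (Fin n))
    (hmat : (permMat p)⁻¹ * G₂.adjMatrix ℚ * permMat p = G₁.adjMatrix ℚ * permMat q) :
    ∃ hq : q ∈ autPi G₁,
      γ₁ ⟨q, hq⟩ = (⟨q, hq⟩ : autPi G₁)⁻¹ ∧
      (Nonempty (G₁ ≃g G₂) ↔
        (⟨q, hq⟩ : autPi G₁) ∈ Set.range fun π : autPi G₁ => π⁻¹ * γ₁ π) := by
  have hγ : IsGammaMap G₁ γ₁ := hγ₁
  have hadj := adj_iff_of_permMat_conj hmat
  refine ⟨mem_autPi_of_adj_iff hadj,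
    Subtype.ext (hred₁.coe_gamma_eq hγ (image_neighborSet_of_adj_iff hadj)), ?_⟩
  constructor
  · rintro ⟨f⟩
    exact hred₁.mem_range_inv_mul_gamma_of_iso hγ hadj f
  · rintro ⟨π, hπ⟩
    exact hγ.nonempty_iso hadj π (congrArg Subtype.val hπ)

/-- If Γ₁, Γ₂ are reduced graphs on {1,…,n} with adjacency matrices A₁, A₂ and
m_p⁻¹ · A₂ · m_p = A₁ · m_q, then q is an antimorphism of Γ₁ (q ∈ Aut^π(Γ₁) with
γ(q) = q⁻¹), and Γ₁ ≅ Γ₂ iff q ∈ Im(α_{Γ₁}). -/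
theorem stmt_17 {n : ℕ} (G₁ G₂ : SimpleGraph (Fin n))
    [DecidableRel G₁.Adj] [DecidableRel G₂.Adj]
    (hred₁ : Reduced G₁) (hred₂ : Reduced G₂)
    (γ₁ : autPi G₁ → autPi G₁)
    (hγ₁ : ∀ (π : autPi G₁) (v : Fin n),
      (π : Equiv.Perm (Fin n)) '' G₁.neighborSet v =
        G₁.neighborSet ((γ₁ π : Equiv.Perm (Fin n)) v))
    (p q : Equiv.Perm (Fin n))
    (hmat : (permMat p)⁻¹ * G₂.adjMatrix ℚ * permMat p = G₁.adjMatrix ℚ * permMat q) :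
    ∃ hq : q ∈ autPi G₁,
      γ₁ ⟨q, hq⟩ = (⟨q, hq⟩ : autPi G₁)⁻¹ ∧
      (Nonempty (G₁ ≃g G₂) ↔
        (⟨q, hq⟩ : autPi G₁) ∈ Set.range fun π : autPi G₁ => π⁻¹ * γ₁ π) :=
  stmt_17_general G₁ G₂ hred₁ γ₁ hγ₁ p q hmat
end

section
/- Let Γ = (V,E) be a reduced finite simple graph with vertex set {1,…,n} and adjacency matrix A, and let ψ be a permutation of {1,…,n}. Then the following are equivalent: (i) there exists a finite simple graph Γ_ψ with adjacency matrix A · m_ψ; (ii) ψ ∈ Ant(Γ) and (v, ψ(v)) ∉ E for every vertex v. Moreover, if Γ_ψ exists, then Γ_ψ is reduced and two-fold isomorphic to Γ. -/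
/-
A graph `Γ'` has adjacency matrix `A · m_ψ` exactly when `Γ'.Adj i j ↔ Γ.Adj i (ψ j)`. Such a
graph exists iff this relation is symmetric and irreflexive. Symmetry says precisely that
`ψ '' N(v) = N(ψ⁻¹ v)` for every `v`, i.e. `ψ ∈ Aut^π(Γ)` with `γ(ψ) = ψ⁻¹` (for reduced `Γ`,
`γ(ψ)` is determined by these images); irreflexivity says `(v, ψ v) ∉ E`. Since `N_{Γ'}(u)` is
the preimage of `N_Γ(u)` under `ψ`, the pair `(id, ψ⁻¹)` is a two-fold isomorphism `Γ → Γ'`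
and `Γ'` is reduced along with `Γ`.
-/

open SimpleGraph

section Twist

variable {V : Type*} (G : SimpleGraph V) (ψ : Equiv.Perm V)

theorem image_neighborSet_eq_iff_adj_comm :
    (∀ v, ψ '' G.neighborSet v = G.neighborSet (ψ⁻¹ v)) ↔
      ∀ i j, G.Adj i (ψ j) ↔ G.Adj j (ψ i) := by
  have hmem : ∀ u v, u ∈ ψ '' G.neighborSet v ↔ G.Adj v (ψ⁻¹ u) := fun u v => by
    simp [Equiv.image_eq_preimage_symm]
  constructor
  · intro h i j
    simpa [hmem, adj_comm] using Set.ext_iff.mp (h (ψ j)) (ψ i)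
  · intro h v
    ext u
    rw [hmem, mem_neighborSet, adj_comm]
    simpa using h (ψ⁻¹ u) (ψ⁻¹ v)

/-- The graph with adjacency matrix `A · m_ψ`. -/
def twist (hsymm : ∀ i j, G.Adj i (ψ j) → G.Adj j (ψ i)) (hloop : ∀ v, ¬ G.Adj v (ψ v)) :
    SimpleGraph V where
  Adj i j := G.Adj i (ψ j)
  symm := ⟨hsymm⟩
  loopless := ⟨hloop⟩

theorem Reduced.of_adj_iff_adj_perm {G G' : SimpleGraph V} (hred : Reduced G)
    (hadj : ∀ i j, G'.Adj i j ↔ G.Adj i (ψ j)) : Reduced G' := by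
  have hnbr : ∀ u, G'.neighborSet u = ψ ⁻¹' G.neighborSet u := fun u => by
    ext j; exact hadj u j
  intro u v huv
  rw [hnbr, hnbr] at huv
  exact hred u v (Set.preimage_injective.mpr ψ.surjective huv)

end Twist

theorem exists_mem_autPi_eq_inv_iff {V : Type*} [Fintype V] {G : SimpleGraph V}
    (hred : Reduced G) {γ : autPi G → autPi G}
    (hγ : ∀ (π : autPi G) (v : V),
      (π : Equiv.Perm V) '' G.neighborSet v = G.neighborSet ((γ π : Equiv.Perm V) v))
    (ψ : Equiv.Perm V) :
    (∃ hψ : ψ ∈ autPi G, γ ⟨ψ, hψ⟩ = (⟨ψ, hψ⟩ : autPi G)⁻¹) ↔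
      ∀ v, ψ '' G.neighborSet v = G.neighborSet (ψ⁻¹ v) := by
  constructor
  · rintro ⟨hψ, hinv⟩ v
    simpa [hinv] using hγ ⟨ψ, hψ⟩ v
  · intro h
    have hψ : ψ ∈ autPi G := fun v => ⟨ψ⁻¹ v, h v⟩
    refine ⟨hψ, Subtype.ext (Equiv.ext fun v => ?_)⟩
    exact hred _ _ ((hγ ⟨ψ, hψ⟩ v).symm.trans (h v))

theorem adjMatrix_mul_permMat_apply {n : ℕ} (G : SimpleGraph (Fin n)) [DecidableRel G.Adj]
    (ψ : Equiv.Perm (Fin n)) (i j : Fin n) :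
    (G.adjMatrix ℚ * permMat ψ) i j = G.adjMatrix ℚ i (ψ j) := by
  simp [Matrix.mul_apply, permMat, mul_ite]

theorem adj_iff_of_adjMatrix_eq_mul_permMat {n : ℕ} {G G' : SimpleGraph (Fin n)}
    [DecidableRel G.Adj] [DecidableRel G'.Adj] {ψ : Equiv.Perm (Fin n)}
    (h : G'.adjMatrix ℚ = G.adjMatrix ℚ * permMat ψ) (i j : Fin n) :
    G'.Adj i j ↔ G.Adj i (ψ j) := by
  have hij := congrFun (congrFun h i) j
  rw [adjMatrix_mul_permMat_apply] at hij
  by_cases h₁ : G'.Adj i j <;> by_cases h₂ : G.Adj i (ψ j) <;> simp_all [adjMatrix_apply]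

/-- For a reduced graph Γ on {1,…,n} with adjacency matrix A and a permutation ψ:
there exists a simple graph with adjacency matrix A · m_ψ iff ψ is an antimorphism of Γ
(ψ ∈ Aut^π(Γ) with γ(ψ) = ψ⁻¹) mapping every vertex outside its neighborhood;
moreover any such graph is reduced and two-fold isomorphic to Γ. -/
theorem stmt_18 {n : ℕ} (G : SimpleGraph (Fin n)) [DecidableRel G.Adj]
    (hred : Reduced G)
    (γ : autPi G → autPi G)
    (hγ : ∀ (π : autPi G) (v : Fin n),
      (π : Equiv.Perm (Fin n)) '' G.neighborSet v =
        G.neighborSet ((γ π : Equiv.Perm (Fin n)) v))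
    (ψ : Equiv.Perm (Fin n)) :
    ((∃ (G' : SimpleGraph (Fin n)) (inst : DecidableRel G'.Adj),
        @SimpleGraph.adjMatrix ℚ (Fin n) G' inst _ _ = G.adjMatrix ℚ * permMat ψ) ↔
      ((∃ hψ : ψ ∈ autPi G, γ ⟨ψ, hψ⟩ = (⟨ψ, hψ⟩ : autPi G)⁻¹) ∧
        ∀ v : Fin n, ¬ G.Adj v (ψ v))) ∧
    (∀ (G' : SimpleGraph (Fin n)) (inst : DecidableRel G'.Adj),
      @SimpleGraph.adjMatrix ℚ (Fin n) G' inst _ _ = G.adjMatrix ℚ * permMat ψ →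
      Reduced G' ∧
        ∃ π₁ π₂ : Equiv.Perm (Fin n),
          ∀ v w : Fin n, G.Adj v w ↔ G'.Adj (π₁ v) (π₂ w)) := by
  rw [exists_mem_autPi_eq_inv_iff hred hγ, image_neighborSet_eq_iff_adj_comm]
  refine ⟨⟨?_, ?_⟩, fun G' _ hG' => ?_⟩
  · rintro ⟨G', _, hG'⟩
    have hadj := adj_iff_of_adjMatrix_eq_mul_permMat hG'
    refine ⟨fun i j => ?_, fun v => (hadj v v).not.mp (G'.loopless.irrefl v)⟩
    rw [← hadj, ← hadj, adj_comm]
  · rintro ⟨hsymm, hloop⟩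
    refine ⟨twist G ψ (fun i j => (hsymm i j).mp) hloop, fun i j => ‹DecidableRel G.Adj› i (ψ j),
      Matrix.ext fun i j => ?_⟩
    rw [adjMatrix_mul_permMat_apply]
    simp [adjMatrix_apply, twist]
  · have hadj := adj_iff_of_adjMatrix_eq_mul_permMat hG'
    exact ⟨Reduced.of_adj_iff_adj_perm ψ hred hadj, 1, ψ⁻¹, fun v w => by simp [hadj]⟩
end

section
/- Let H be a finite group and let σ ∈ Aut(H) satisfy σ² = id. Form the semidirect product G = H ⋊_θ ℤ₂, where ℤ₂ = {e,x} and θ(x) = σ, and let S(H,σ) = {g ∈ G : g ∉ H × {e} and g² = e}. Then every conjugacy class of G that is contained in S(H,σ) contains an element of the form x·h₀ with h₀ ∈ H whose order is a power of 2 (i.e. ord(h₀) = 2^k for some k ≥ 0). -/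
/-!
Write `g = h·x` with `h ∈ H`. Then `g² = 1` says exactly that `x` inverts `h`, so conjugating `g`
by `h^s` turns it into `h^(2s+1)·x`. Taking for `2s+1` the odd part of `ord h` leaves an element
`h^(2s+1)` whose order is the `2`-part of `ord h`; and `h'·x = x·σ(h')` with `σ` order-preserving.
-/

theorem exists_pow_not_dvd_orderOf_pow_eq_prime_pow {G : Type*} [Monoid G] {a : G}
    (ha : IsOfFinOrder a) {p : ℕ} (hp : p.Prime) :
    ∃ m : ℕ, ¬p ∣ m ∧ orderOf (a ^ m) = p ^ (orderOf a).factorization p := by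
  have hn : orderOf a ≠ 0 := ha.orderOf_pos.ne'
  refine ⟨orderOf a / p ^ (orderOf a).factorization p, Nat.not_dvd_ordCompl hp hn, ?_⟩
  rw [orderOf_pow_of_dvd (Nat.ordCompl_pos p hn).ne' (Nat.ordCompl_dvd _ p),
    Nat.div_div_self (Nat.ordProj_dvd _ p) hn]

namespace SemidirectProduct

variable {N G : Type*} [Group N] [Group G] {φ : G →* MulAut N}

theorem inl_mul_inr_eq_inr_mul_inl (n : N) (g : G) :
    (inl n * inr g : N ⋊[φ] G) = inr g * inl ((φ g)⁻¹ n) := by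
  ext <;> simp

theorem map_right_left_eq_inv_of_sq_eq_one {x : N ⋊[φ] G} (hx : x ^ 2 = 1) :
    φ x.right x.left = x.left⁻¹ :=
  eq_inv_of_mul_eq_one_right (by simpa [pow_two, mul_left] using congrArg left hx)

theorem isConj_inl_mul_inr_inl_pow_mul_inr {a : N} {g : G} (ha : φ g a = a⁻¹) {m : ℕ}
    (hm : Odd m) : IsConj (inl a * inr g : N ⋊[φ] G) (inl (a ^ m) * inr g) := by
  obtain ⟨s, rfl⟩ := hm
  refine isConj_iff.2 ⟨inl (a ^ s), ?_⟩
  ext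
  · simp only [mul_left, mul_right, inv_left, left_inl, right_inl, left_inr, right_inr, map_one,
      MulAut.one_apply, mul_one, one_mul, inv_one, map_inv]
    rw [map_pow, ha]
    group
  · simp [-map_pow]

theorem right_eq_ofAdd_one_of_notMem_range_inl
    {ψ : Multiplicative (ZMod 2) →* MulAut N} {x : N ⋊[ψ] Multiplicative (ZMod 2)}
    (hx : x ∉ (inl : N →* N ⋊[ψ] Multiplicative (ZMod 2)).range) :
    x.right = Multiplicative.ofAdd 1 := by
  rw [range_inl_eq_ker_rightHom, MonoidHom.mem_ker, rightHom_eq_right] at hx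
  revert hx
  generalize x.right = y
  decide +revert

end SemidirectProduct

theorem stmt_19_general {H : Type*} [Group H] [Finite H]
    (θ : Multiplicative (ZMod 2) →* MulAut H)
    (g : H ⋊[θ] Multiplicative (ZMod 2))
    (hg₁ : g ∉ (SemidirectProduct.inl : H →* H ⋊[θ] Multiplicative (ZMod 2)).range)
    (hg₂ : g ^ 2 = 1) :
    ∃ (h₀ : H) (k : ℕ), orderOf h₀ = 2 ^ k ∧
      IsConj g
        (SemidirectProduct.inr (Multiplicative.ofAdd (1 : ZMod 2)) *
          SemidirectProduct.inl h₀) := by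
  obtain ⟨m, hm, hord⟩ :=
    exists_pow_not_dvd_orderOf_pow_eq_prime_pow (isOfFinOrder_of_finite g.left) Nat.prime_two
  have hconj := SemidirectProduct.isConj_inl_mul_inr_inl_pow_mul_inr
    (SemidirectProduct.map_right_left_eq_inv_of_sq_eq_one hg₂)
    (Nat.odd_iff.mpr (Nat.two_dvd_ne_zero.mp hm))
  rw [SemidirectProduct.inl_left_mul_inr_right,
    SemidirectProduct.right_eq_ofAdd_one_of_notMem_range_inl hg₁,
    SemidirectProduct.inl_mul_inr_eq_inr_mul_inl] at hconj
  exact ⟨_, _, by rw [MulEquiv.orderOf_eq, hord], hconj⟩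

/-- Let H be a finite group, σ an involutive automorphism of H, and
G = H ⋊_θ ℤ₂ the semidirect product in which the nontrivial element x of ℤ₂ acts
on H by σ. Every element of G of order two lying outside H (i.e. every element of
S(H,σ)) is conjugate in G to an element of the form x·h₀ where the order of h₀ in H
is a power of 2. -/
theorem stmt_19 {H : Type*} [Group H] [Finite H] (σ : MulAut H) (hσ : σ * σ = 1)
    (θ : Multiplicative (ZMod 2) →* MulAut H)
    (hθ : θ (Multiplicative.ofAdd (1 : ZMod 2)) = σ)
    (g : H ⋊[θ] Multiplicative (ZMod 2))
    (hg₁ : g ∉ (SemidirectProduct.inl : H →* H ⋊[θ] Multiplicative (ZMod 2)).range)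
    (hg₂ : g ^ 2 = 1) :
    ∃ (h₀ : H) (k : ℕ), orderOf h₀ = 2 ^ k ∧
      IsConj g
        (SemidirectProduct.inr (Multiplicative.ofAdd (1 : ZMod 2)) *
          SemidirectProduct.inl h₀) :=
  stmt_19_general θ g hg₁ hg₂
end
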